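/- With the modified bracket {.,.}_gr on C[x_{ij}] as above, the centralizer of x_{11}, i.e. { a : {x_{11}, a}_gr = 0 }, equals the subalgebra C[x_{11}, x_{ij} : 2 ≤ i,j ≤ n] generated by x_{11} together with the entries of the lower-right (n−1)×(n−1) block. -/

import Mathlib

/- The semiclassical limit Poisson bracket on O(M_n) = ℂ[x_{ij}], realized on
`MvPolynomial (Fin n × Fin n) ℂ`.  The Leibniz-rule extension of a bracket
given on generators by the antisymmetric bivector `Pn n p q = {x_p, x_q}` is
the bidifferential operator `pbn n f g = ∑ p q, Pn n p q * ∂f/∂x_p * ∂g/∂x_q`. -/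

open MvPolynomial

noncomputable section

/-- The bivector of the semiclassical limit bracket:
`{x_{ij}, x_{kl}} = 2 x_{il} x_{kj}` if `i<k` and `j<l`;
`= x_{ij} x_{kl}` if (`i=k` and `j<l`) or (`j=l` and `i<k`); `= 0` otherwise;
extended antisymmetrically. -/
def Pn (n : ℕ) (p q : Fin n × Fin n) : MvPolynomial (Fin n × Fin n) ℂ :=
  if p.1 < q.1 ∧ p.2 < q.2 then 2 * X (p.1, q.2) * X (q.1, p.2)
  else if q.1 < p.1 ∧ q.2 < p.2 then -(2 * X (q.1, p.2) * X (p.1, q.2))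
  else if (p.1 = q.1 ∧ p.2 < q.2) ∨ (p.2 = q.2 ∧ p.1 < q.1) then X p * X q
  else if (p.1 = q.1 ∧ q.2 < p.2) ∨ (p.2 = q.2 ∧ q.1 < p.1) then -(X p * X q)
  else 0

/-- The semiclassical limit Poisson bracket on `O(M_n)` (the Leibniz-rule
extension of the bracket on generators). -/
def pbn (n : ℕ) (f g : MvPolynomial (Fin n × Fin n) ℂ) :
    MvPolynomial (Fin n × Fin n) ℂ :=
  ∑ p : Fin n × Fin n, ∑ q : Fin n × Fin n, Pn n p q * pderiv p f * pderiv q g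

/-- The bivector of the modified (associated graded) bracket `{.,.}_gr` on
`O(M_{n+1})`: it agrees with the semiclassical bivector on pairs of generators
other than `x_{11}` (index `(0,0)`), and
`{x_{11}, x_{ij}}_gr = 0` for `i,j ≥ 2`,
`{x_{11}, x_{1j}}_gr = x_{11}x_{1j}`, `{x_{11}, x_{i1}}_gr = x_{11}x_{i1}`. -/
def Pgr (n : ℕ) (p q : Fin (n + 1) × Fin (n + 1)) :
    MvPolynomial (Fin (n + 1) × Fin (n + 1)) ℂ :=
  if p = (0, 0) then
    (if q = (0, 0) then 0
     else if q.1 = 0 ∨ q.2 = 0 then X p * X q else 0)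
  else if q = (0, 0) then
    (if p.1 = 0 ∨ p.2 = 0 then -(X p * X q) else 0)
  else Pn (n + 1) p q

/-- The modified bracket `{.,.}_gr` (Leibniz-rule extension of `Pgr`). -/
def pbgr (n : ℕ) (f g : MvPolynomial (Fin (n + 1) × Fin (n + 1)) ℂ) :
    MvPolynomial (Fin (n + 1) × Fin (n + 1)) ℂ :=
  ∑ p : Fin (n + 1) × Fin (n + 1), ∑ q : Fin (n + 1) × Fin (n + 1),
    Pgr n p q * pderiv p f * pderiv q g

/- `{x₁₁, a}_gr = x₁₁ · E a`, where `E = ∑ x_q ∂/∂x_q` runs over the variables `q` of the first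
row and column other than `(0, 0)`. This partial Euler operator multiplies each monomial by its
total degree in those variables, so (in characteristic zero) `E a = 0` exactly when `a` does not
involve them, i.e. when `a` lies in the subalgebra generated by the remaining variables. -/

namespace MvPolynomial

variable {σ R : Type*} [CommSemiring R]

theorem coeff_sum_X_mul_pderiv (s : Finset σ) (a : MvPolynomial σ R) (m : σ →₀ ℕ) :
    coeff m (∑ i ∈ s, X i * pderiv i a) = (∑ i ∈ s, m i) • coeff m a := by
  induction a using MvPolynomial.induction_on' with
  | monomial u r =>
    simp only [X_mul_pderiv_monomial, ← Finset.sum_smul, coeff_smul]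
    by_cases h : u = m
    · rw [h]
    · classical rw [coeff_monomial, if_neg h, smul_zero, smul_zero]
  | add f g hf hg =>
    simp only [map_add, mul_add, Finset.sum_add_distrib, coeff_add, hf, hg, smul_add]

theorem sum_X_mul_pderiv_eq_zero_iff_mem_supported_compl [IsAddTorsionFree R]
    (s : Finset σ) (a : MvPolynomial σ R) :
    ∑ i ∈ s, X i * pderiv i a = 0 ↔ a ∈ supported R (↑s)ᶜ := by
  simp only [mem_supported, Set.subset_compl_iff_disjoint_right, Finset.disjoint_coe,
    Finset.disjoint_left, mem_vars_iff_mem_support, MvPolynomial.ext_iff, coeff_zero,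
    coeff_sum_X_mul_pderiv, smul_eq_zero, Finset.sum_eq_zero_iff, mem_support_iff,
    Finsupp.mem_support_iff]
  grind

end MvPolynomial

def hookArmLeg (n : ℕ) : Finset (Fin (n + 1) × Fin (n + 1)) :=
  {q | q ≠ (0, 0) ∧ (q.1 = 0 ∨ q.2 = 0)}

theorem pbgr_X_zero_zero (n : ℕ) (a : MvPolynomial (Fin (n + 1) × Fin (n + 1)) ℂ) :
    pbgr n (X (0, 0)) a = X (0, 0) * ∑ q ∈ hookArmLeg n, X q * pderiv q a := by
  rw [pbgr, Finset.sum_eq_single_of_mem (0, 0) (Finset.mem_univ _), hookArmLeg,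
    Finset.sum_filter, Finset.mul_sum]
  · refine Finset.sum_congr rfl fun q _ => ?_
    rw [pderiv_X_self, Pgr, if_pos rfl]
    by_cases hq : q = (0, 0)
    · simp [hq]
    · by_cases hrc : q.1 = 0 ∨ q.2 = 0 <;> simp [hq, hrc, mul_assoc]
  · intro p _ hp
    simp [pderiv_X_of_ne (Ne.symm hp)]

theorem adjoin_corner_lowerBlock_eq_supported (n : ℕ) :
    Algebra.adjoin ℂ
        ({X ((0 : Fin (n + 1)), (0 : Fin (n + 1)))} ∪
          {f : MvPolynomial (Fin (n + 1) × Fin (n + 1)) ℂ |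
            ∃ p : Fin (n + 1) × Fin (n + 1), p.1 ≠ 0 ∧ p.2 ≠ 0 ∧ f = X p}) =
      supported ℂ (↑(hookArmLeg n))ᶜ := by
  rw [supported_eq_adjoin_X]
  congr 1
  ext f
  simp only [hookArmLeg, Finset.coe_filter, Finset.mem_univ, true_and]
  constructor
  · rintro (rfl | ⟨p, h1, h2, rfl⟩)
    · exact ⟨(0, 0), by simp, rfl⟩
    · exact ⟨p, by simp [h1, h2], rfl⟩
  · rintro ⟨⟨i, j⟩, hij, rfl⟩
    by_cases hi : i = 0 <;> by_cases hj : j = 0 <;> simp_all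

/-- the centralizer of `x_{11}` with respect to `{.,.}_gr`
equals the subalgebra generated by `x_{11}` and the entries of the lower-right
`n × n` block. -/
theorem stmt16 (n : ℕ) :
    ∀ a : MvPolynomial (Fin (n + 1) × Fin (n + 1)) ℂ,
      pbgr n (X (0, 0)) a = 0 ↔
      a ∈ Algebra.adjoin ℂ
        ({X ((0 : Fin (n + 1)), (0 : Fin (n + 1)))} ∪
          {f : MvPolynomial (Fin (n + 1) × Fin (n + 1)) ℂ |
            ∃ p : Fin (n + 1) × Fin (n + 1), p.1 ≠ 0 ∧ p.2 ≠ 0 ∧ f = X p}) := by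
  intro a
  rw [pbgr_X_zero_zero, mul_eq_zero, or_iff_right (X_ne_zero _),
    sum_X_mul_pderiv_eq_zero_iff_mem_supported_compl, adjoin_corner_lowerBlock_eq_supported]
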